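/- arXiv:1104.2706 — 4 statements merged into one kernel-verified Lean document; each statement's English description precedes it below -/
import Mathlib

section
/- Let Π be a subspace partition of V(n,q) containing at least one member of dimension d and at least one of dimension d', with 1 ≤ d, d' ≤ n-2, d ≠ d', and d + d' ≤ n - 1. Then Σ_H b_d(H)·b_{d'}(H) = m_d · m_{d'} · θ_{n-d-d'}, where the sum is over all hyperplanes H of V. -/
open Module

/-- θ_j = (q^j - 1)/(q - 1). -/
def theta (q j : ℕ) : ℕ := (q ^ j - 1) / (q - 1)

/-- A subspace partition: a collection of nonzero subspaces such that every
nonzero vector lies in exactly one member. -/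
def IsSubspacePartition {F V : Type*} [Field F] [AddCommGroup V] [Module F V]
    (P : Finset (Submodule F V)) : Prop :=
  (∀ W ∈ P, W ≠ ⊥) ∧ ∀ v : V, v ≠ 0 → ∃! W, W ∈ P ∧ v ∈ W

/-!
Expanding `b_d(H) * b_{d'}(H)` and exchanging the sums, the left side counts the triples
`(W, W', H)` with `W ≤ H` and `W' ≤ H`. Members of a partition of different dimensions are distinct,
hence meet trivially, so `W ⊔ W'` has dimension `d + d'`. Taking dual annihilators, the hyperplanes
containing a `k`-dimensional subspace correspond to the lines of an `(n - k)`-dimensional space,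
i.e. to the points of its projective space, of which there are `θ_{n-k}`.
-/

open Finset
open scoped LinearAlgebra.Projectivization

theorem Finset.sum_card_filter_mul_card_filter {α β γ : Type*} (S : Finset γ) (A : Finset α)
    (B : Finset β) (r : α → γ → Prop) (r' : β → γ → Prop) [∀ a h, Decidable (r a h)]
    [∀ b h, Decidable (r' b h)] :
    ∑ h ∈ S, #{a ∈ A | r a h} * #{b ∈ B | r' b h}
      = ∑ a ∈ A, ∑ b ∈ B, #{h ∈ S | r a h ∧ r' b h} := by
  simp only [card_filter, sum_mul_sum, ite_zero_mul_ite_zero, mul_one]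
  rw [sum_comm]
  exact sum_congr rfl fun _ _ => sum_comm

section

variable {F V : Type*} [Field F] [AddCommGroup V] [Module F V]

namespace IsSubspacePartition

variable {P : Finset (Submodule F V)}

theorem inf_eq_bot (hP : IsSubspacePartition P) {W W' : Submodule F V} (hW : W ∈ P)
    (hW' : W' ∈ P) (hne : W ≠ W') : W ⊓ W' = ⊥ := by
  refine (Submodule.eq_bot_iff _).2 fun v hv => by_contra fun hv0 => hne ?_
  obtain ⟨_, _, huniq⟩ := hP.2 v hv0
  exact (huniq W ⟨hW, hv.1⟩).trans (huniq W' ⟨hW', hv.2⟩).symm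

theorem finrank_sup [FiniteDimensional F V] (hP : IsSubspacePartition P) {W W' : Submodule F V}
    (hW : W ∈ P) (hW' : W' ∈ P) (hne : W ≠ W') :
    finrank F ↥(W ⊔ W') = finrank F W + finrank F W' := by
  have := Submodule.finrank_sup_add_finrank_inf_eq W W'
  rwa [hP.inf_eq_bot hW hW' hne, finrank_bot, add_zero] at this

end IsSubspacePartition

variable [Fintype F]

theorem theta_card_finrank_eq_natCard_projectivization [FiniteDimensional F V] :
    theta (Fintype.card F) (finrank F V) = Nat.card (ℙ F V) := by
  have : Finite V := Module.finite_of_finite F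
  rw [Projectivization.card'', theta, Module.natCard_eq_pow_finrank (K := F),
    Nat.card_eq_fintype_card]

theorem natCard_lines_le (A : Submodule F V) [FiniteDimensional F A] :
    Nat.card {L : Submodule F V // L ≤ A ∧ finrank F L = 1}
      = theta (Fintype.card F) (finrank F A) := by
  rw [theta_card_finrank_eq_natCard_projectivization,
    Nat.card_congr (Projectivization.equivSubmodule F A)]
  refine Nat.card_congr <| .symm <|
    ((Submodule.MapSubtype.orderIso A).toEquiv.subtypeEquiv fun L => ?_).trans
      (Equiv.subtypeSubtypeEquivSubtypeInter (· ≤ A) (finrank F · = 1))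
  exact (Submodule.finrank_map_subtype_eq A L).symm ▸ Iff.rfl

theorem natCard_hyperplanes_ge [FiniteDimensional F V] (U : Submodule F V) :
    Nat.card {H : Submodule F V // U ≤ H ∧ finrank F H + 1 = finrank F V}
      = theta (Fintype.card F) (finrank F V - finrank F U) := by
  have hdim (W : Submodule F V) := Subspace.finrank_add_finrank_dualAnnihilator_eq W
  have hU := hdim U
  rw [show finrank F V - finrank F U = finrank F U.dualAnnihilator by omega, ← natCard_lines_le]
  refine Nat.card_congr <|
    (Subspace.orderIsoFiniteDimensional.toEquiv.trans OrderDual.ofDual).subtypeEquiv fun H => ?_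
  have := hdim H
  change _ ↔ H.dualAnnihilator ≤ U.dualAnnihilator ∧ finrank F H.dualAnnihilator = 1
  rw [Subspace.dualAnnihilator_le_dualAnnihilator_iff]
  exact and_congr_right' (by omega)

open scoped Classical in
theorem IsSubspacePartition.card_hyperplanes_ge_of_finrank_ne [Fintype V]
    {P : Finset (Submodule F V)} (hP : IsSubspacePartition P) {W W' : Submodule F V}
    (hW : W ∈ P) (hW' : W' ∈ P) (hne : finrank F W ≠ finrank F W') :
    #{H : Submodule F V | finrank F H = finrank F V - 1 ∧ W ≤ H ∧ W' ≤ H}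
      = theta (Fintype.card F) (finrank F V - finrank F W - finrank F W') := by
  have hsup := hP.finrank_sup hW hW' (by rintro rfl; exact hne rfl)
  have hle := (W ⊔ W').finrank_le
  rw [Nat.sub_sub, ← hsup, ← natCard_hyperplanes_ge, ← Fintype.card_subtype,
    ← Nat.card_eq_fintype_card]
  refine Nat.card_congr <| Equiv.subtypeEquivRight fun H => ?_
  rw [sup_le_iff]
  exact ⟨fun ⟨h, hW, hW'⟩ => ⟨⟨hW, hW'⟩, by omega⟩, fun ⟨hWW', h⟩ => ⟨by omega, hWW'⟩⟩

end

open scoped Classical in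
theorem sum_over_hyperplanes_bd_bd'_general {F : Type*} [Field F] [Fintype F]
    (q n d d' : ℕ) (hq : Fintype.card F = q)
    (P : Finset (Submodule F (Fin n → F))) (hP : IsSubspacePartition P)
    (hne : d ≠ d') :
    ∑ H ∈ (Finset.univ.filter
        (fun (H : Submodule F (Fin n → F)) => finrank F ↥H = n - 1)),
      (P.filter (fun (W : Submodule F (Fin n → F)) => finrank F ↥W = d ∧ W ≤ H)).card *
      (P.filter (fun (W : Submodule F (Fin n → F)) => finrank F ↥W = d' ∧ W ≤ H)).card
      = (P.filter (fun (W : Submodule F (Fin n → F)) => finrank F ↥W = d)).card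
          * (P.filter (fun (W : Submodule F (Fin n → F)) => finrank F ↥W = d')).card
          * theta q (n - d - d') := by
  simp only [← filter_filter]
  rw [sum_card_filter_mul_card_filter, mul_assoc]
  refine sum_const_nat fun W hW => sum_const_nat fun W' hW' => ?_
  obtain ⟨hWP, rfl⟩ := mem_filter.1 hW
  obtain ⟨hW'P, rfl⟩ := mem_filter.1 hW'
  have hcount := hP.card_hyperplanes_ge_of_finrank_ne hWP hW'P hne
  rwa [finrank_fin_fun, hq, ← filter_filter] at hcount

open scoped Classical in
theorem sum_over_hyperplanes_bd_bd' {F : Type*} [Field F] [Fintype F]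
    (q n d d' : ℕ) (hq : Fintype.card F = q)
    (P : Finset (Submodule F (Fin n → F))) (hP : IsSubspacePartition P)
    (hd1 : 1 ≤ d) (hd2 : d ≤ n - 2) (hd'1 : 1 ≤ d') (hd'2 : d' ≤ n - 2)
    (hne : d ≠ d') (hsum : d + d' ≤ n - 1)
    (hmd : ∃ W ∈ P, finrank F ↥W = d) (hmd' : ∃ W ∈ P, finrank F ↥W = d') :
    ∑ H ∈ (Finset.univ.filter
        (fun (H : Submodule F (Fin n → F)) => finrank F ↥H = n - 1)),
      (P.filter (fun (W : Submodule F (Fin n → F)) => finrank F ↥W = d ∧ W ≤ H)).card *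
      (P.filter (fun (W : Submodule F (Fin n → F)) => finrank F ↥W = d' ∧ W ≤ H)).card
      = (P.filter (fun (W : Submodule F (Fin n → F)) => finrank F ↥W = d)).card
          * (P.filter (fun (W : Submodule F (Fin n → F)) => finrank F ↥W = d')).card
          * theta q (n - d - d') :=
  sum_over_hyperplanes_bd_bd'_general q n d d' hq P hP hne
end

section
/- Let n, k, t, r be integers with 0 ≤ r < t, k ≥ 2, n = kt + r, and set ℓ = q^r · Σ_{i=0}^{k-2} q^{it}. Then V(n,q) admits a subspace partition of size ℓ·q^t + 1, consisting of ℓ·q^t subspaces of dimension t and one subspace of dimension t + r. -/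
open Module

/-- ℓ = q^r · Σ_{i=0}^{k-2} q^{it}. -/
def ell (q k t r : ℕ) : ℕ := q ^ r * ∑ i ∈ Finset.range (k - 1), q ^ (i * t)

/-!
Write `F^n = F^t × E`, where `E` is the field with `q^m` elements, `m = n - t`, seen as an
`F`-space, and fix an `F`-linear embedding `j : F^t → E`. The `q^m` graphs of the maps
`a ↦ c * j a` (`c ∈ E`) are `t`-dimensional, and a vector `(a, b)` with `a ≠ 0` lies on
exactly one of them, namely the one with `c = b / j a`. The vectors `(0, b)` are covered by a
partition of `E ≅ F^m` of the same kind, obtained by induction on `k` since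
`m = (k - 1) t + r`; this adds `q^{(k-1)t+r}` subspaces of dimension `t` at each step, which is
how `ℓ q^t` accumulates.
-/

open scoped Classical

section
variable {F V V' : Type*} [Field F] [AddCommGroup V] [Module F V] [AddCommGroup V']
  [Module F V']

def IsPartitionOfType (P : Finset (Submodule F V)) (W : Submodule F V) (N t d : ℕ) : Prop :=
  IsSubspacePartition P ∧ W ∈ P ∧ finrank F W = d ∧ (P.erase W).card = N ∧
    ∀ U ∈ P.erase W, finrank F U = t

theorem isPartitionOfType_singleton_top [Nontrivial V] (t : ℕ) :
    IsPartitionOfType ({⊤} : Finset (Submodule F V)) ⊤ 0 t (finrank F V) := by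
  exact ⟨⟨by simp, fun v _ => ⟨⊤, by simp, by simp⟩⟩, by simp, finrank_top F V, by simp, by simp⟩

theorem IsSubspacePartition.map_equiv {P : Finset (Submodule F V)} (hP : IsSubspacePartition P)
    (e : V ≃ₗ[F] V') : IsSubspacePartition (P.image (Submodule.map (e : V →ₗ[F] V'))) := by
  refine ⟨?_, fun v hv => ?_⟩
  · simpa using hP.1
  · obtain ⟨W, ⟨hWP, hvW⟩, huniq⟩ := hP.2 (e.symm v) (by simpa using hv)
    refine ⟨W.map (e : V →ₗ[F] V'),
      ⟨Finset.mem_image_of_mem _ hWP, (Submodule.mem_map_equiv W).mpr hvW⟩, ?_⟩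
    rintro _ ⟨hU, hvU⟩
    obtain ⟨U, hUP, rfl⟩ := Finset.mem_image.mp hU
    rw [huniq U ⟨hUP, (Submodule.mem_map_equiv U).mp hvU⟩]

theorem IsPartitionOfType.map_equiv {P : Finset (Submodule F V)} {W : Submodule F V} {N t d : ℕ}
    (h : IsPartitionOfType P W N t d) (e : V ≃ₗ[F] V') :
    IsPartitionOfType (P.image (Submodule.map (e : V →ₗ[F] V'))) (W.map (e : V →ₗ[F] V'))
      N t d := by
  obtain ⟨hP, hW, hWd, hN, ht⟩ := h
  have hinj : Function.Injective (Submodule.map (e : V →ₗ[F] V')) :=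
    Submodule.map_injective_of_injective e.injective
  refine ⟨hP.map_equiv e, Finset.mem_image_of_mem _ hW, by rwa [e.finrank_map_eq], ?_, ?_⟩
  · rwa [← Finset.image_erase hinj, Finset.card_image_of_injective _ hinj]
  · rw [← Finset.image_erase hinj]
    rintro _ hU
    obtain ⟨U, hUP, rfl⟩ := Finset.mem_image.mp hU
    rw [e.finrank_map_eq, ht U hUP]

end

section
variable {F E U : Type*} [Field F] [Field E] [Algebra F E] [AddCommGroup U] [Module F U]

def mulGraph (j : U →ₗ[F] E) (c : E) : Submodule F (U × E) :=
  (LinearMap.mulLeft F c ∘ₗ j).graph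

variable {j : U →ₗ[F] E}

theorem mem_mulGraph {c : E} {x : U × E} : x ∈ mulGraph j c ↔ x.2 = c * j x.1 := Iff.rfl

theorem finrank_mulGraph (c : E) : finrank F (mulGraph j c) = finrank F U := by
  rw [mulGraph, LinearMap.graph_eq_range_prod, LinearMap.finrank_range_of_inj]
  exact fun a b h => congrArg Prod.fst h

theorem mulGraph_ne_bot_prod [Nontrivial U] (c : E) (W : Submodule F E) :
    mulGraph j c ≠ (⊥ : Submodule F U).prod W := by
  obtain ⟨a, ha⟩ := exists_ne (0 : U)
  intro h
  have : (a, c * j a) ∈ (⊥ : Submodule F U).prod W := h ▸ mem_mulGraph.mpr rfl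
  exact ha (Submodule.mem_prod.mp this).1

theorem mulGraph_injective (hj : Function.Injective j) [Nontrivial U] :
    Function.Injective (mulGraph j) := by
  obtain ⟨a, ha⟩ := exists_ne (0 : U)
  have hja : j a ≠ 0 := (map_ne_zero_iff j hj).mpr ha
  intro c c' h
  have : (a, c * j a) ∈ mulGraph j c' := h ▸ mem_mulGraph.mpr rfl
  exact mul_right_cancel₀ hja (mem_mulGraph.mp this)

theorem bot_prod_injective :
    Function.Injective ((⊥ : Submodule F U).prod : Submodule F E → _) :=
  fun W W' h => by simpa using congrArg (Submodule.comap (LinearMap.inr F U E)) h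

theorem finrank_bot_prod (W : Submodule F E) :
    finrank F ((⊥ : Submodule F U).prod W) = finrank F W := by
  rw [← Submodule.map_inr]
  exact (Submodule.equivMapOfInjective _ LinearMap.inr_injective W).finrank_eq.symm

theorem IsSubspacePartition.bot_prod_union_mulGraph [Fintype E] [Nontrivial U]
    {P : Finset (Submodule F E)} (hP : IsSubspacePartition P) (hj : Function.Injective j) :
    IsSubspacePartition
      (P.image ((⊥ : Submodule F U).prod) ∪ Finset.univ.image (mulGraph j)) := by
  refine ⟨?_, ?_⟩
  · simp only [Finset.mem_union, Finset.mem_image, Finset.mem_univ, true_and]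
    rintro _ (⟨W, hW, rfl⟩ | ⟨c, rfl⟩)
    · rw [← Submodule.prod_bot]
      exact bot_prod_injective.ne (hP.1 W hW)
    · rw [← Submodule.prod_bot]
      exact mulGraph_ne_bot_prod c ⊥
  rintro ⟨a, b⟩ hab
  simp only [Finset.mem_union, Finset.mem_image, Finset.mem_univ, true_and]
  by_cases ha : a = 0
  · subst ha
    have hb : b ≠ 0 := fun hb => hab (by rw [hb, Prod.mk_zero_zero])
    obtain ⟨W, ⟨hWP, hbW⟩, huniq⟩ := hP.2 b hb
    refine ⟨(⊥ : Submodule F U).prod W, ⟨Or.inl ⟨W, hWP, rfl⟩, by simpa using hbW⟩, ?_⟩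
    rintro _ ⟨⟨W', hW'P, rfl⟩ | ⟨c, rfl⟩, hmem⟩
    · rw [huniq W' ⟨hW'P, by simpa using hmem⟩]
    · exact absurd (by simpa using mem_mulGraph.mp hmem) hb
  · have hja : j a ≠ 0 := (map_ne_zero_iff j hj).mpr ha
    refine ⟨mulGraph j (b / j a),
      ⟨Or.inr ⟨_, rfl⟩, mem_mulGraph.mpr (div_mul_cancel₀ b hja).symm⟩, ?_⟩
    rintro _ ⟨⟨W', -, rfl⟩ | ⟨c, rfl⟩, hmem⟩
    · exact absurd (Submodule.mem_prod.mp hmem).1 ha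
    · rw [eq_div_of_mul_eq hja (mem_mulGraph.mp hmem).symm]

theorem IsPartitionOfType.bot_prod_union_mulGraph [Fintype E] [Nontrivial U]
    {P : Finset (Submodule F E)} {W : Submodule F E} {N d : ℕ}
    (h : IsPartitionOfType P W N (finrank F U) d) (hj : Function.Injective j) :
    IsPartitionOfType (P.image ((⊥ : Submodule F U).prod) ∪ Finset.univ.image (mulGraph j))
      ((⊥ : Submodule F U).prod W) (N + Fintype.card E) (finrank F U) d := by
  obtain ⟨hP, hW, hWd, hN, ht⟩ := h
  have hdisj :
      Disjoint (P.image ((⊥ : Submodule F U).prod)) (Finset.univ.image (mulGraph j)) := by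
    simp only [Finset.disjoint_left, Finset.mem_image, Finset.mem_univ, true_and, not_exists]
    rintro _ ⟨W', -, rfl⟩ c h
    exact mulGraph_ne_bot_prod c W' h
  have hmem : (⊥ : Submodule F U).prod W ∈ P.image ((⊥ : Submodule F U).prod) :=
    Finset.mem_image_of_mem _ hW
  refine ⟨hP.bot_prod_union_mulGraph hj, Finset.mem_union_left _ hmem,
    by rwa [finrank_bot_prod], ?_, ?_⟩
  · rw [Finset.card_erase_of_mem (Finset.mem_union_left _ hmem),
      Finset.card_union_of_disjoint hdisj, Finset.card_image_of_injective _ bot_prod_injective,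
      Finset.card_image_of_injective _ (mulGraph_injective hj), Finset.card_univ,
      ← Finset.card_erase_add_one hW, hN]
    omega
  · intro X hX
    obtain ⟨hXW, hX⟩ := Finset.mem_erase.mp hX
    rcases Finset.mem_union.mp hX with hX | hX
    · obtain ⟨W', hW', rfl⟩ := Finset.mem_image.mp hX
      rw [finrank_bot_prod]
      exact ht W' (Finset.mem_erase.mpr ⟨fun h => hXW (h ▸ rfl), hW'⟩)
    · obtain ⟨c, -, rfl⟩ := Finset.mem_image.mp hX
      exact finrank_mulGraph c

end

theorem ell_succ_mul_pow (q t r : ℕ) {k : ℕ} (hk : 1 ≤ k) :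
    ell q (k + 1) t r * q ^ t = ell q k t r * q ^ t + q ^ (k * t + r) := by
  obtain ⟨k, rfl⟩ := Nat.exists_eq_add_of_le' hk
  simp only [ell, Nat.add_sub_cancel, Finset.sum_range_succ]
  ring

theorem exists_isPartitionOfType (F : Type*) [Field F] [Fintype F] {t : ℕ} (ht : 0 < t)
    (r : ℕ) {k : ℕ} (hk : 1 ≤ k) :
    ∃ (P : Finset (Submodule F (Fin (k * t + r) → F))) (W : Submodule F (Fin (k * t + r) → F)),
      IsPartitionOfType P W (ell (Fintype.card F) k t r * Fintype.card F ^ t) t (t + r) := by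
  induction k, hk using Nat.le_induction with
  | base =>
    have : Nontrivial (Fin (1 * t + r) → F) := Pi.nontrivial_at ⟨0, by omega⟩
    refine ⟨{⊤}, ⊤, ?_⟩
    simpa [ell, add_comm r] using
      isPartitionOfType_singleton_top (F := F) (V := Fin (1 * t + r) → F) t
  | succ k hk ih =>
    obtain ⟨P, W, h⟩ := ih
    have : Fact (ringChar F).Prime := ⟨CharP.char_is_prime F _⟩
    have : NeZero (k * t + r) := ⟨by positivity⟩
    let E := FiniteField.Extension F (ringChar F) (k * t + r)
    let : Fintype E := Fintype.ofFinite E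
    have hE : finrank F E = k * t + r := FiniteField.finrank_extension F _ _
    have hcardE : Fintype.card E = Fintype.card F ^ (k * t + r) := by
      rw [Fintype.card_eq_nat_card, FiniteField.natCard_extension, Nat.card_eq_fintype_card]
    obtain ⟨v, hv⟩ := exists_linearIndependent_of_le_finrank (R := F) (M := E) (n := t)
      (by rw [hE]; nlinarith)
    let e := LinearEquiv.ofFinrankEq (Fin (k * t + r) → F) E (by rw [hE, finrank_fin_fun])
    have hPE : IsPartitionOfType (P.image (Submodule.map (e : _ →ₗ[F] E)))
        (W.map (e : _ →ₗ[F] E)) (ell (Fintype.card F) k t r * Fintype.card F ^ t)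
        (finrank F (Fin t → F)) (t + r) := by
      rw [finrank_fin_fun]
      exact h.map_equiv e
    have : Nontrivial (Fin t → F) := Pi.nontrivial_at ⟨0, ht⟩
    have hnext := hPE.bot_prod_union_mulGraph hv.fintypeLinearCombination_injective
    rw [finrank_fin_fun, hcardE, ← ell_succ_mul_pow _ _ _ hk] at hnext
    refine ⟨_, _, hnext.map_equiv (LinearEquiv.ofFinrankEq _ _ ?_)⟩
    rw [finrank_fin_fun, finrank_prod, finrank_fin_fun, hE]
    ring

open scoped Classical in
theorem exists_partition_min_type {F : Type*} [Field F] [Fintype F]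
    (q n k t r : ℕ) (hq : Fintype.card F = q)
    (hk : 2 ≤ k) (hr : r < t) (hn : n = k * t + r) :
    ∃ P : Finset (Submodule F (Fin n → F)), IsSubspacePartition P ∧
      P.card = ell q k t r * q ^ t + 1 ∧
      ∃ W ∈ P, finrank F ↥W = t + r ∧
        (P.erase W).card = ell q k t r * q ^ t ∧
        ∀ U ∈ P.erase W, finrank F ↥U = t := by
  subst hq hn
  obtain ⟨P, W, hP, hW, hWd, hN, ht⟩ :=
    exists_isPartitionOfType F (show 0 < t by omega) r (show 1 ≤ k by omega)
  exact ⟨P, hP, by rw [← Finset.card_erase_add_one hW, hN], W, hW, hWd, hN, ht⟩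
end

section
/- Let Π be a subspace partition of V(n,q) in which every member has dimension at least t, where n = kt + r, k ≥ 2, 0 ≤ r < t. If ℓ = q^r·Σ_{i=0}^{k-2} q^{it}, then |Π| ≤ ℓ·q^t + 1. -/
/-!
Counting nonzero vectors gives `∑_{W ∈ Π} (|W| - 1) = q^n - 1`. Since every `|W|` is a power
of `q` with exponent at least `t`, this yields both `|Π| (q^t - 1) ≤ q^n - 1` and
`|Π| ≡ 1 (mod q^t)`. The first bound gives `|Π| < ℓ q^t + 1 + q^t`, because
`(ℓ q^t + 1 + q^t)(q^t - 1) = q^n - 1 + q^t (q^t - q^r)` and `r < t`; the congruence then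
forces `|Π| ≤ ℓ q^t + 1`.
-/

open Module

namespace IsSubspacePartition

variable {F V : Type*} [Field F] [AddCommGroup V] [Module F V] {P : Finset (Submodule F V)}

theorem sum_card_sub_one [Finite V] (hP : IsSubspacePartition P) :
    ∑ W ∈ P, (Nat.card W - 1) = Nat.card V - 1 := by
  classical
  have := Fintype.ofFinite V
  let nonzero : Submodule F V → Finset V := fun W => (W : Set V).toFinset.erase 0
  have hcover : Finset.univ.erase 0 = P.biUnion nonzero := by
    ext v
    simp only [Finset.mem_erase, Finset.mem_univ, and_true, Finset.mem_biUnion, nonzero,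
      Set.mem_toFinset, SetLike.mem_coe]
    refine ⟨fun hv => ?_, fun ⟨_, _, hv, _⟩ => hv⟩
    obtain ⟨W, ⟨hWP, hvW⟩, -⟩ := hP.2 v hv
    exact ⟨W, hWP, hv, hvW⟩
  have hdisj : (P : Set (Submodule F V)).PairwiseDisjoint nonzero := by
    intro W₁ h₁ W₂ h₂ hne
    refine Finset.disjoint_left.2 fun v hv₁ hv₂ => hne ?_
    simp only [nonzero, Finset.mem_erase, Set.mem_toFinset, SetLike.mem_coe] at hv₁ hv₂
    exact (hP.2 v hv₁.1).unique ⟨h₁, hv₁.2⟩ ⟨h₂, hv₂.2⟩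
  have hcard (W : Submodule F V) : (nonzero W).card = Nat.card W - 1 := by
    rw [Finset.card_erase_of_mem (by simp), ← Nat.card_eq_card_toFinset]
    rfl
  rw [Nat.card_eq_fintype_card, ← Finset.card_univ,
    ← Finset.card_erase_of_mem (Finset.mem_univ 0), hcover, Finset.card_biUnion hdisj]
  exact Finset.sum_congr rfl fun W _ => (hcard W).symm

theorem sum_card_add_one [Finite V] (hP : IsSubspacePartition P) :
    ∑ W ∈ P, Nat.card W + 1 = Nat.card V + P.card := by
  have hpos (W : Submodule F V) : 1 ≤ Nat.card W := Nat.card_pos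
  calc ∑ W ∈ P, Nat.card W + 1 = ∑ W ∈ P, (Nat.card W - 1) + P.card + 1 := by
        rw [Finset.card_eq_sum_ones, ← Finset.sum_add_distrib]
        exact congrArg (· + 1)
          (Finset.sum_congr rfl fun W _ => (Nat.sub_add_cancel (hpos W)).symm)
    _ = Nat.card V + P.card := by
        rw [hP.sum_card_sub_one]
        have : 1 ≤ Nat.card V := Nat.card_pos
        omega

variable [Finite V] {t : ℕ}

theorem card_mul_pow_add_one_le [Finite F] (hP : IsSubspacePartition P)
    (hmin : ∀ W ∈ P, t ≤ finrank F W) :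
    P.card * Nat.card F ^ t + 1 ≤ Nat.card V + P.card := by
  have hq : 1 ≤ Nat.card F := Nat.card_pos
  rw [← hP.sum_card_add_one, Finset.card_eq_sum_ones, Finset.sum_mul]
  gcongr ∑ W ∈ P, ?_ + 1 with W hW
  rw [one_mul, natCard_eq_pow_finrank (K := F) (V := W)]
  exact Nat.pow_le_pow_right hq (hmin W hW)

theorem card_modEq_one [Nontrivial V] (hP : IsSubspacePartition P)
    (hmin : ∀ W ∈ P, t ≤ finrank F W) : P.card ≡ 1 [MOD Nat.card F ^ t] := by
  have hdvd (W : Submodule F V) (hW : t ≤ finrank F W) : Nat.card F ^ t ∣ Nat.card W := by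
    rw [natCard_eq_pow_finrank (K := F) (V := W)]
    exact pow_dvd_pow _ hW
  obtain ⟨v, hv⟩ := exists_ne (0 : V)
  obtain ⟨W, ⟨hWP, -⟩, -⟩ := hP.2 v hv
  have hV : Nat.card F ^ t ∣ Nat.card V := by
    rw [natCard_eq_pow_finrank (K := F) (V := V)]
    exact pow_dvd_pow _ ((hmin W hWP).trans (Submodule.finrank_le W))
  have hS : Nat.card F ^ t ∣ ∑ W ∈ P, Nat.card W :=
    Finset.dvd_sum fun W hW => hdvd W (hmin W hW)
  refine Nat.ModEq.add_left_cancel' 0 ?_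
  calc 0 + P.card ≡ Nat.card V + P.card [MOD Nat.card F ^ t] :=
        Nat.ModEq.add_right _ (Nat.modEq_zero_iff_dvd.2 hV).symm
    _ = ∑ W ∈ P, Nat.card W + 1 := hP.sum_card_add_one.symm
    _ ≡ 0 + 1 [MOD Nat.card F ^ t] := Nat.ModEq.add_right _ (Nat.modEq_zero_iff_dvd.2 hS)

end IsSubspacePartition

/-- `ell q k t r * (q ^ t - 1) = q ^ r * (q ^ ((k - 1) * t) - 1)`, without subtraction. -/
theorem ell_mul_pow_add_pow (q k t r : ℕ) :
    ell q k t r * q ^ t + q ^ r = ell q k t r + q ^ ((k - 1) * t) * q ^ r := by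
  have hgeom (x m : ℕ) :
      (∑ i ∈ Finset.range m, x ^ i) * x + 1 = ∑ i ∈ Finset.range m, x ^ i + x ^ m := by
    rw [mul_comm, ← geom_sum_succ, geom_sum_succ', add_comm]
  simp only [ell, mul_comm _ t, pow_mul]
  calc _ = q ^ r * ((∑ i ∈ Finset.range (k - 1), (q ^ t) ^ i) * q ^ t + 1) := by ring
    _ = _ := by rw [hgeom]; ring

theorem lt_ell_mul_pow_add_one_add_pow {q k t r N : ℕ} (hq : 2 ≤ q) (hk : 1 ≤ k) (hr : r < t)
    (h : N * q ^ t + 1 ≤ q ^ (k * t + r) + N) : N < ell q k t r * q ^ t + 1 + q ^ t := by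
  have hid := ell_mul_pow_add_pow q k t r
  have hpow : q ^ (k * t + r) = q ^ ((k - 1) * t) * q ^ r * q ^ t := by
    rw [← pow_add, ← pow_add, add_right_comm, ← add_one_mul, Nat.sub_add_cancel hk]
  have hRX : q ^ r < q ^ t := Nat.pow_lt_pow_right hq hr
  have hX : 1 ≤ q ^ t := Nat.one_le_pow _ _ (by omega)
  by_contra! hN
  nlinarith [Nat.mul_le_mul_right (q ^ t - 1) hN]

theorem partition_card_upper_bound {F : Type*} [Field F] [Fintype F]
    (q n k t r : ℕ) (hq : Fintype.card F = q)
    (hk : 2 ≤ k) (hr : r < t) (hn : n = k * t + r)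
    (P : Finset (Submodule F (Fin n → F))) (hP : IsSubspacePartition P)
    (hmin : ∀ W ∈ P, t ≤ finrank F ↥W) :
    P.card ≤ ell q k t r * q ^ t + 1 := by
  have hq2 : 2 ≤ q := hq ▸ Fintype.one_lt_card
  have hcardF : Nat.card F = q := by rw [Nat.card_eq_fintype_card, hq]
  have hcardV : Nat.card (Fin n → F) = q ^ (k * t + r) := by
    rw [Nat.card_fun, Nat.card_fin, hcardF, hn]
  have : NeZero n := ⟨by nlinarith⟩
  have hbound := hP.card_mul_pow_add_one_le hmin
  have hcong := hP.card_modEq_one hmin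
  rw [hcardF, hcardV] at hbound
  rw [hcardF] at hcong
  have hell : 1 ≡ ell q k t r * q ^ t + 1 [MOD q ^ t] :=
    ((Nat.modEq_zero_iff_dvd.2 (dvd_mul_left _ _)).add_right 1).symm
  exact (hcong.trans hell).le_of_lt_add
    (lt_ell_mul_pow_add_one_add_pow hq2 (by omega) hr hbound)
end

section
/- Let Π be a subspace partition of V(n,q) in which every member has dimension at least t ≥ 1. Then |Π| ≡ 1 (mod q^t). -/
/-!
Every nonzero vector lies in exactly one member of the partition, so counting nonzero vectors gives
`∑_{W ∈ Π} (q ^ dim W - 1) = q ^ n - 1`, i.e. `∑_{W ∈ Π} q ^ dim W + 1 = q ^ n + |Π|`.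
Modulo `q ^ t` every power on either side vanishes, leaving `1 ≡ |Π|`.
-/

open Module

open Finset

namespace IsSubspacePartition

variable {F V : Type*} [Field F] [AddCommGroup V] [Module F V] {P : Finset (Submodule F V)}

theorem sum_natCard_add_one [Finite V] (hP : IsSubspacePartition P) :
    ∑ W ∈ P, Nat.card W + 1 = Nat.card V + #P := by
  classical
  have : Fintype V := Fintype.ofFinite V
  let nonzero : Submodule F V → Finset V := fun W => (univ.filter (· ∈ W)).erase 0
  have card_nonzero (W : Submodule F V) : #(nonzero W) + 1 = Nat.card W := by
    rw [card_erase_add_one (by simp), Nat.card_eq_fintype_card, Fintype.card_subtype]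
  have disjoint : (P : Set (Submodule F V)).PairwiseDisjoint nonzero := by
    intro W₁ h₁ W₂ h₂ hne
    refine disjoint_left.2 fun v hv₁ hv₂ => hne ?_
    simp only [nonzero, mem_erase, mem_filter_univ] at hv₁ hv₂
    obtain ⟨W, -, huniq⟩ := hP.2 v hv₁.1
    exact (huniq W₁ ⟨h₁, hv₁.2⟩).trans (huniq W₂ ⟨h₂, hv₂.2⟩).symm
  have cover : P.biUnion nonzero = univ.erase 0 := by
    ext v
    simp only [nonzero, mem_biUnion, mem_erase, mem_filter_univ, mem_univ, and_true]
    refine ⟨fun ⟨_, _, hv, _⟩ => hv, fun hv => ?_⟩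
    obtain ⟨W, ⟨hW, hvW⟩, -⟩ := hP.2 v hv
    exact ⟨W, hW, hv, hvW⟩
  calc ∑ W ∈ P, Nat.card W + 1 = ∑ W ∈ P, #(nonzero W) + 1 + #P := by
        simp only [← card_nonzero, sum_add_distrib, sum_const, smul_eq_mul, mul_one]
        ring
    _ = Nat.card V + #P := by
        rw [← card_biUnion disjoint, cover, card_erase_add_one (mem_univ 0), card_univ,
          Nat.card_eq_fintype_card]

end IsSubspacePartition

theorem partition_card_mod_general {F : Type*} [Field F] [Fintype F]
    (q n t : ℕ) (hq : Fintype.card F = q) (hn : t < n)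
    (P : Finset (Submodule F (Fin n → F))) (hP : IsSubspacePartition P)
    (hmin : ∀ W ∈ P, t ≤ finrank F ↥W) :
    P.card ≡ 1 [MOD q ^ t] := by
  have card_eq (W : Submodule F (Fin n → F)) : Nat.card W = q ^ finrank F W := by
    rw [natCard_eq_pow_finrank (K := F), Nat.card_eq_fintype_card, hq]
  have sum_modEq_zero : ∑ W ∈ P, Nat.card W ≡ 0 [MOD q ^ t] :=
    Nat.modEq_zero_iff_dvd.2 <| dvd_sum fun W hW => card_eq W ▸ pow_dvd_pow q (hmin W hW)
  have card_modEq_zero : Nat.card (Fin n → F) ≡ 0 [MOD q ^ t] := by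
    refine Nat.modEq_zero_iff_dvd.2 ?_
    rw [Nat.card_fun, Nat.card_fin, Nat.card_eq_fintype_card, hq]
    exact pow_dvd_pow q hn.le
  calc #P = 0 + #P := (zero_add _).symm
    _ ≡ Nat.card (Fin n → F) + #P [MOD q ^ t] := (card_modEq_zero.add_right _).symm
    _ = ∑ W ∈ P, Nat.card W + 1 := hP.sum_natCard_add_one.symm
    _ ≡ 0 + 1 [MOD q ^ t] := sum_modEq_zero.add_right 1

theorem partition_card_mod {F : Type*} [Field F] [Fintype F]
    (q n t : ℕ) (hq : Fintype.card F = q) (ht : 1 ≤ t) (hn : t < n)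
    (P : Finset (Submodule F (Fin n → F))) (hP : IsSubspacePartition P)
    (hmin : ∀ W ∈ P, t ≤ finrank F ↥W) :
    P.card ≡ 1 [MOD q ^ t] :=
  partition_card_mod_general q n t hq hn P hP hmin
end
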